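/- arXiv:2409.14467 — 4 statements merged into one kernel-verified Lean document; each statement's English description precedes it below -/
import Mathlib

section
/- Let F be a field, α ∈ F nonzero, and let a = α·x be the corresponding Laurent polynomial in F[x, x⁻¹]. Then for every β ∈ F and every integer m, the element a − 1 divides β·xᵐ − 1 in F[x, x⁻¹] if and only if β = αᵐ (integer power in the group of units of F). -/
/-!
Evaluating at `x = α⁻¹`, a root of `α x - 1`, turns the divisibility into `β α⁻ᵐ = 1`.
Conversely `β xᵐ = (α x)ᵐ`, and `u - 1` divides `uᵐ - 1` for every unit `u` and every `m : ℤ`: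
for `m < 0` because `u⁻¹ - 1 = -u⁻¹ (u - 1)`.
-/

open LaurentPolynomial

theorem sub_one_dvd_sub_one_of_mul_eq_one {R : Type*} [CommRing R] {a b : R} (h : a * b = 1) :
    a - 1 ∣ b - 1 :=
  ⟨-b, by linear_combination h⟩

namespace LaurentPolynomial

variable {R : Type*}

theorem C_mul_T_pow [CommSemiring R] (r : R) (k : ℤ) (n : ℕ) :
    (C r * T k : R[T;T⁻¹]) ^ n = C (r ^ n) * T (n * k) := by
  rw [mul_pow, map_pow, T_pow]

variable [CommRing R]

theorem C_mul_T_one_sub_one_dvd (u : Rˣ) (m : ℤ) :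
    (C (u : R) * T 1 - 1 : R[T;T⁻¹]) ∣ C ((u ^ m : Rˣ) : R) * T m - 1 := by
  obtain ⟨n, rfl | rfl⟩ := Int.eq_nat_or_neg m
  · have := sub_one_dvd_pow_sub_one (C (u : R) * T 1) n
    rwa [C_mul_T_pow, mul_one, ← Units.val_pow_eq_pow_val, ← zpow_natCast] at this
  · have hinv : (C (u : R) * T 1 : R[T;T⁻¹]) * (C ((u⁻¹ : Rˣ) : R) * T (-1)) = 1 := by
      rw [mul_mul_mul_comm, ← map_mul, Units.mul_inv, ← T_add, add_neg_cancel, map_one, T_zero,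
        one_mul]
    refine (sub_one_dvd_sub_one_of_mul_eq_one hinv).trans ?_
    have := sub_one_dvd_pow_sub_one (C ((u⁻¹ : Rˣ) : R) * T (-1)) n
    rwa [C_mul_T_pow, mul_neg_one, ← Units.val_pow_eq_pow_val, ← zpow_natCast, inv_zpow,
      ← zpow_neg] at this

theorem C_mul_T_one_sub_one_dvd_iff (u : Rˣ) (r : R) (m : ℤ) :
    (C (u : R) * T 1 - 1 : R[T;T⁻¹]) ∣ C r * T m - 1 ↔ r = ((u ^ m : Rˣ) : R) := by
  refine ⟨fun ⟨c, hc⟩ ↦ ?_, fun h ↦ h ▸ C_mul_T_one_sub_one_dvd u m⟩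
  have hroot : eval₂ (RingHom.id R) u⁻¹ (C (u : R) * T 1 - 1) = 0 := by simp
  rw [← Units.mul_inv_eq_one, ← sub_eq_zero]
  simpa [hroot] using congrArg (eval₂ (RingHom.id R) u⁻¹) hc

end LaurentPolynomial

theorem stmt_1 (F : Type*) [Field F] (α : F) (hα : α ≠ 0) :
    ∀ (β : F) (m : ℤ),
      ((C α * T 1 - 1 : LaurentPolynomial F) ∣ (C β * T m - 1)) ↔ β = α ^ m := fun β m ↦ by
  simpa using C_mul_T_one_sub_one_dvd_iff (Units.mk0 α hα) β m
end

section
/- Let k, n be integers with |k| > 2. Then n = k² if and only if (n − 1 = (k − 1)(k + 1) or n − 1 = −(k − 1)(k + 1)) and k divides n. -/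
theorem stmt_4 (k n : ℤ) (hk : 2 < |k|) :
    n = k ^ 2 ↔
      ((n - 1 = (k - 1) * (k + 1) ∨ n - 1 = -((k - 1) * (k + 1))) ∧ k ∣ n) := by
  constructor
  · rintro rfl
    exact ⟨Or.inl (by ring), ⟨k, (sq k)⟩⟩
  · rintro ⟨h1 | h1, hd⟩
    · linarith [sq_nonneg k, h1]
    · exfalso
      have hn : n = 2 - k ^ 2 := by linarith [h1]
      have h2 : k ∣ 2 := by
        have : k ∣ k ^ 2 := dvd_pow_self k two_ne_zero
        have := dvd_sub hd (dvd_neg.mpr this)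
        simpa [hn] using this
      have := Int.le_of_dvd (by norm_num) ((abs_dvd k 2).mpr h2)
      omega
end

section
/- Let s ∈ ℤ[x]. The quotient ring ℤ[x]/⟨s⟩ is isomorphic (as a ring) to ℤ if and only if there exists c ∈ ℤ such that s = x + c or s = −x + c. -/
open Polynomial

theorem stmt_5 (s : ℤ[X]) :
    Nonempty ((ℤ[X] ⧸ Ideal.span {s}) ≃+* ℤ) ↔
      ∃ c : ℤ, s = X + C c ∨ s = -X + C c := by
  constructor
  · rintro ⟨e⟩
    set φ : ℤ[X] →+* ℤ := e.toRingHom.comp (Ideal.Quotient.mk _)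
    have hker : RingHom.ker φ = Ideal.span {s} := by
      ext p
      simp [φ, RingHom.mem_ker, Ideal.Quotient.eq_zero_iff_mem,
        map_eq_zero_iff _ e.injective]
    set a : ℤ := φ X with ha
    have hφ : ∀ p : ℤ[X], φ p = p.eval a := by
      intro p
      induction p using Polynomial.induction_on with
      | C c => simp [map_intCast φ c]
      | add p q hp hq => simp [hp, hq]
      | monomial n c ih => simp_all [pow_succ, ← mul_assoc]
    have hker2 : RingHom.ker φ = Ideal.span {X - C a} := by
      ext p
      rw [RingHom.mem_ker, hφ, Ideal.mem_span_singleton, dvd_iff_isRoot, IsRoot]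
    have hassoc : Associated s (X - C a) := by
      rw [← Ideal.span_singleton_eq_span_singleton, ← hker, hker2]
    obtain ⟨u, hu⟩ := hassoc
    obtain ⟨r, hr, hCr⟩ := Polynomial.isUnit_iff.mp u.isUnit
    rcases Int.isUnit_iff.mp hr with h | h
    · refine ⟨-a, Or.inl ?_⟩
      rw [← hCr, h, map_one, mul_one] at hu
      rw [hu, map_neg]; ring
    · refine ⟨a, Or.inr ?_⟩
      rw [← hCr, h, map_neg, map_one] at hu
      linear_combination -hu
  · rintro ⟨c, h | h⟩
    · have : s = X - C (-c) := by simp [h]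
      rw [this]
      exact ⟨(Polynomial.quotientSpanXSubCAlgEquiv (-c)).toRingEquiv⟩
    · have hspan : Ideal.span {s} = Ideal.span {X - C c} := by
        rw [h, ← Ideal.span_singleton_neg]
        ring_nf
      rw [hspan]
      exact ⟨(Polynomial.quotientSpanXSubCAlgEquiv c).toRingEquiv⟩
end

section
/- Let k ≥ 1 and let b : Fin k → ℤ be a nonzero integer vector. Then there exists a k×k integer matrix A with determinant ±1 such that the matrix obtained from A by adding b to its first row has determinant that is not ±1. -/
theorem stmt_15 (k : ℕ) (hk : 1 ≤ k) (b : Fin k → ℤ) (hb : b ≠ 0) :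
    ∃ A : Matrix (Fin k) (Fin k) ℤ, IsUnit A.det ∧
      ¬ IsUnit (A.updateRow (⟨0, hk⟩ : Fin k) (A ⟨0, hk⟩ + b)).det := by
  classical
  obtain ⟨j, hj⟩ : ∃ j, b j ≠ 0 := by
    by_contra h
    push_neg at h
    exact hb (funext h)
  set i0 : Fin k := ⟨0, hk⟩
  set σ : Equiv.Perm (Fin k) := Equiv.swap i0 j
  set M : Matrix (Fin k) (Fin k) ℤ := (1 : Matrix (Fin k) (Fin k) ℤ).submatrix σ id
  set s : ℤ := if 0 < b j then 1 else -1
  set A : Matrix (Fin k) (Fin k) ℤ := M.updateRow i0 (s • M i0)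
  have hMdet : M.det = ((Equiv.Perm.sign σ : ℤˣ) : ℤ) := by
    rw [Matrix.det_permute, Matrix.det_one, mul_one]; norm_cast
  have hMunit : IsUnit M.det := by
    rw [hMdet]; exact (Equiv.Perm.sign σ).isUnit
  have hAdet : A.det = s * M.det := by
    rw [Matrix.det_updateRow_smul, Matrix.updateRow_eq_self]
  have hupd : ∀ v : Fin k → ℤ, A.updateRow i0 v = M.updateRow i0 v := by
    intro v
    ext i l
    by_cases hi : i = i0 <;> simp [A, hi, Matrix.updateRow_apply]
  -- det of M with row i0 replaced by b
  have hb_eq : (M.updateRow i0 b).det = ((Equiv.Perm.sign σ : ℤˣ) : ℤ) * b j := by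
    have h1 : M.updateRow i0 b = ((1 : Matrix (Fin k) (Fin k) ℤ).updateRow j b).submatrix σ id := by
      ext i l
      by_cases hi : i = i0
      · subst hi
        simp [Matrix.updateRow_self, Matrix.submatrix_apply, σ, Equiv.swap_apply_left]
      · have : σ i ≠ j := by
          intro h
          apply hi
          have := σ.injective (h.trans (Equiv.swap_apply_left i0 j).symm)
          exact this
        simp [Matrix.updateRow_ne hi, Matrix.submatrix_apply, Matrix.updateRow_ne this, M]
        rfl
    have h2 : ((1 : Matrix (Fin k) (Fin k) ℤ).updateRow j b).det = b j := by
      have hsum : b = ∑ l, b l • (1 : Matrix (Fin k) (Fin k) ℤ) l := by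
        ext m
        simp [Matrix.one_apply, Pi.single_apply]
      calc ((1 : Matrix (Fin k) (Fin k) ℤ).updateRow j b).det
          = ((1 : Matrix (Fin k) (Fin k) ℤ).updateRow j (∑ l, b l • (1 : Matrix (Fin k) (Fin k) ℤ) l)).det := by rw [← hsum]
        _ = b j • (1 : Matrix (Fin k) (Fin k) ℤ).det := Matrix.det_updateRow_sum _ _ _
        _ = b j := by simp
    rw [h1, Matrix.det_permute, h2]; norm_cast
  refine ⟨A, ?_, ?_⟩
  · rw [hAdet]
    exact (Int.isUnit_iff.mpr (by unfold s; split <;> simp)).mul hMunit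
  · have hA0 : A i0 = s • M i0 := Matrix.updateRow_self
    rw [hA0, hupd, Matrix.det_updateRow_add, Matrix.det_updateRow_smul,
      Matrix.updateRow_eq_self, hb_eq, hMdet]
    intro hu
    have hu' : IsUnit (s + b j) := by
      have heq : s * ((Equiv.Perm.sign σ : ℤˣ) : ℤ) + ((Equiv.Perm.sign σ : ℤˣ) : ℤ) * b j
          = ((Equiv.Perm.sign σ : ℤˣ) : ℤ) * (s + b j) := by ring
      rw [heq] at hu
      exact isUnit_of_mul_isUnit_right hu
    rw [Int.isUnit_iff] at hu'
    unfold s at hu'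
    rcases hu' with h | h <;> split at h <;> omega
end
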